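/- arXiv:2403.16688 — 5 statements merged into one kernel-verified Lean document; each statement's English description precedes it below -/
import Mathlib

section
/- Let $p_0$ be an absolutely continuous probability density on $\mathbb{R}$ with finite Fisher information for location $i(p_0) = \int_{\{p_0>0\}}(p_0')^2/p_0 < \infty$. Then $p_0$ is bounded and $i(p_0) \geq 4\,\|p_0\|_\infty^2$, where $\|p_0\|_\infty = \sup_{z\in\mathbb{R}} p_0(z)$. -/
open MeasureTheory

/-!
On `{p₀ > 0}` one has `|p₀'| = √(φ p₀)`, where `φ` is the Fisher integrand, and `p₀' = 0` almost
everywhere on `{p₀ = 0}`: almost every point is one where `p₀` has derivative `p₀'`, and a zero of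
`p₀ ≥ 0` is a minimum. Hence `|p₀ y - p₀ x| ≤ ∫ₓʸ √(φ p₀)`. Being integrable, `p₀` takes arbitrarily
small values on both sides of any `x`, so `2 p₀ x ≤ ∫ √(φ p₀)`, and by Cauchy–Schwarz
`(∫ √(φ p₀))² ≤ ∫ φ · ∫ p₀ = i(p₀)`.
-/

open Set Filter Topology

theorem ae_hasDerivAt_of_sub_eq_intervalIntegral {E : Type*} [NormedAddCommGroup E]
    [NormedSpace ℝ E] [CompleteSpace E] {F f : ℝ → E} {a b : ℝ}
    (hf : IntervalIntegrable f volume a b) (hF : ∀ x ∈ Icc a b, F x - F a = ∫ z in a..x, f z) :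
    ∀ᵐ z, z ∈ Ioo a b → HasDerivAt F (f z) z := by
  filter_upwards [hf.ae_hasDerivAt_integral] with z hz hzab
  have hab : a ≤ b := (hzab.1.trans hzab.2).le
  have hint := (hz (Icc_subset_uIcc (Ioo_subset_Icc_self hzab)) a
    (Icc_subset_uIcc (left_mem_Icc.2 hab))).const_add (F a)
  refine hint.congr_of_eventuallyEq ?_
  filter_upwards [Icc_mem_nhds hzab.1 hzab.2] with x hx
  rw [← hF x hx, add_sub_cancel]

theorem ae_eq_zero_of_nonneg_of_sub_eq_intervalIntegral {F f : ℝ → ℝ} {a b : ℝ}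
    (hF₀ : ∀ x, 0 ≤ F x) (hf : IntervalIntegrable f volume a b)
    (hF : ∀ x ∈ Icc a b, F x - F a = ∫ z in a..x, f z) :
    ∀ᵐ z, z ∈ Ioo a b → F z = 0 → f z = 0 := by
  filter_upwards [ae_hasDerivAt_of_sub_eq_intervalIntegral hf hF] with z hz hzab hFz
  have hmin : IsLocalMin F z := Eventually.of_forall fun x => hFz ▸ hF₀ x
  exact hmin.hasDerivAt_eq_zero (hz hzab)

theorem exists_mem_lt_of_integrable {α : Type*} [MeasurableSpace α] {μ : Measure α}
    {q : α → ℝ} {s : Set α} {ε : ℝ} (hq : Integrable q μ) (hs : MeasurableSet s)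
    (hμs : μ s = ⊤) (hε : 0 < ε) : ∃ a ∈ s, q a < ε := by
  by_contra! h
  have hconst : Integrable (fun _ : α => ε) (μ.restrict s) := by
    refine hq.restrict.mono' aestronglyMeasurable_const (ae_restrict_of_forall_mem hs ?_)
    intro a ha
    rw [Real.norm_of_nonneg hε.le]
    exact h a ha
  rw [integrable_const_iff, isFiniteMeasure_restrict, hμs] at hconst
  simp [hε.ne'] at hconst

theorem two_mul_le_integral_of_abs_sub_le {q g : ℝ → ℝ} (hq : Integrable q) (hg : Integrable g)
    (hg₀ : ∀ z, 0 ≤ g z) (h : ∀ x y, x ≤ y → |q y - q x| ≤ ∫ z in x..y, g z) (x : ℝ) :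
    2 * q x ≤ ∫ z, g z := by
  refine le_of_forall_pos_le_add fun ε hε => ?_
  obtain ⟨a, hax, hqa⟩ :=
    exists_mem_lt_of_integrable hq measurableSet_Iic Real.volume_Iic (half_pos hε)
  obtain ⟨b, hxb, hqb⟩ :=
    exists_mem_lt_of_integrable hq measurableSet_Ici Real.volume_Ici (half_pos hε)
  have hleft := (le_abs_self _).trans (h a x hax)
  have hright := (neg_le_abs _).trans (h x b hxb)
  have hsplit : (∫ z in a..x, g z) + ∫ z in x..b, g z = ∫ z in a..b, g z :=
    intervalIntegral.integral_add_adjacent_intervals hg.intervalIntegrable hg.intervalIntegrable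
  have hle : ∫ z in a..b, g z ≤ ∫ z, g z := by
    rw [intervalIntegral.integral_of_le (hax.trans hxb)]
    exact setIntegral_le_integral hg (Eventually.of_forall hg₀)
  linarith

theorem integrable_sqrt_mul {α : Type*} [MeasurableSpace α] {μ : Measure α} {u v : α → ℝ}
    (hu : Integrable u μ) (hv : Integrable v μ) (hu₀ : ∀ a, 0 ≤ u a) (hv₀ : ∀ a, 0 ≤ v a) :
    Integrable (fun a => √(u a * v a)) μ := by
  refine ((hu.add hv).div_const 2).mono' (Real.continuous_sqrt.comp_aestronglyMeasurable
    (hu.aestronglyMeasurable.mul hv.aestronglyMeasurable)) (Eventually.of_forall fun a => ?_)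
  rw [Real.norm_of_nonneg (Real.sqrt_nonneg _), Real.sqrt_mul (hu₀ a), Pi.add_apply]
  nlinarith [sq_nonneg (√(u a) - √(v a)), Real.sq_sqrt (hu₀ a), Real.sq_sqrt (hv₀ a)]

theorem sq_integral_sqrt_mul_le {α : Type*} [MeasurableSpace α] {μ : Measure α} {u v : α → ℝ}
    (hu : Integrable u μ) (hv : Integrable v μ) (hu₀ : ∀ a, 0 ≤ u a) (hv₀ : ∀ a, 0 ≤ v a) :
    (∫ a, √(u a * v a) ∂μ) ^ 2 ≤ (∫ a, u a ∂μ) * ∫ a, v a ∂μ := by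
  have hquad : ∀ t : ℝ, 0 ≤ (∫ a, u a ∂μ) * (t * t) + (-2 * ∫ a, √(u a * v a) ∂μ) * t
      + ∫ a, v a ∂μ := by
    intro t
    have hpt : ∀ a, 2 * t * √(u a * v a) ≤ t ^ 2 * u a + v a := fun a => by
      rw [Real.sqrt_mul (hu₀ a)]
      nlinarith [sq_nonneg (t * √(u a) - √(v a)), Real.sq_sqrt (hu₀ a), Real.sq_sqrt (hv₀ a)]
    have hint : ∫ a, 2 * t * √(u a * v a) ∂μ ≤ ∫ a, t ^ 2 * u a + v a ∂μ :=
      integral_mono ((integrable_sqrt_mul hu hv hu₀ hv₀).const_mul (2 * t))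
        ((hu.const_mul (t ^ 2)).add hv) hpt
    rw [integral_const_mul, integral_add (hu.const_mul _) hv, integral_const_mul] at hint
    linarith
  have := discrim_le_zero hquad
  rw [discrim] at this
  linarith

noncomputable def fisherInfoIntegrand (p p' : ℝ → ℝ) (z : ℝ) : ℝ :=
  if 0 < p z then p' z ^ 2 / p z else 0

theorem fisherInfoIntegrand_nonneg (p p' : ℝ → ℝ) (z : ℝ) : 0 ≤ fisherInfoIntegrand p p' z := by
  unfold fisherInfoIntegrand
  split_ifs
  · positivity
  · exact le_rfl

theorem abs_le_sqrt_fisherInfoIntegrand_mul {p p' : ℝ → ℝ} {z : ℝ} (hp : 0 ≤ p z)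
    (hzero : p z = 0 → p' z = 0) : |p' z| ≤ √(fisherInfoIntegrand p p' z * p z) := by
  rcases hp.lt_or_eq with hpos | hzero'
  · rw [fisherInfoIntegrand, if_pos hpos, div_mul_cancel₀ _ hpos.ne', Real.sqrt_sq_eq_abs]
  · rw [hzero hzero'.symm, abs_zero]
    exact Real.sqrt_nonneg _

theorem abs_sub_le_intervalIntegral_sqrt_fisherInfoIntegrand_mul {p p' : ℝ → ℝ}
    (hp₀ : ∀ z, 0 ≤ p z) (hp : ∀ x y, x ≤ y → p y - p x = ∫ z in x..y, p' z) {x y : ℝ}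
    (hxy : x ≤ y)
    (hg : IntervalIntegrable (fun z => √(fisherInfoIntegrand p p' z * p z)) volume x y) :
    |p y - p x| ≤ ∫ z in x..y, √(fisherInfoIntegrand p p' z * p z) := by
  rw [hp x y hxy]
  by_cases hp' : IntervalIntegrable p' volume x y
  · have hzero := ae_eq_zero_of_nonneg_of_sub_eq_intervalIntegral hp₀ hp'
      fun w hw => hp x w hw.1
    refine (intervalIntegral.abs_integral_le_integral_abs hxy).trans
      (intervalIntegral.integral_mono_ae_restrict hxy hp'.abs hg ?_)
    rw [Measure.restrict_congr_set Ioo_ae_eq_Icc.symm]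
    filter_upwards [ae_restrict_mem measurableSet_Ioo, ae_restrict_of_ae hzero] with z hz hz₀
    exact abs_le_sqrt_fisherInfoIntegrand_mul (hp₀ z) (hz₀ hz)
  · rw [intervalIntegral.integral_undef hp', abs_zero]
    exact intervalIntegral.integral_nonneg hxy fun z _ => Real.sqrt_nonneg _

/-- If `p0` is an absolutely continuous probability density on `ℝ` with finite Fisher
information for location `i(p0) = ∫_{p0>0} (p0')²/p0`, then `p0` is bounded and
`i(p0) ≥ 4 ‖p0‖_∞²`. -/
theorem stmt1
    (p0 p0' : ℝ → ℝ)
    (hp0_nonneg : ∀ z, 0 ≤ p0 z)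
    (hp0_dens : ∫ z, p0 z = 1)
    (hp0_ac : ∀ x y : ℝ, x ≤ y → p0 y - p0 x = ∫ z in x..y, p0' z)
    (hfisher_int : Integrable (fun z => if 0 < p0 z then (p0' z) ^ 2 / p0 z else 0)) :
    BddAbove (Set.range p0) ∧
      4 * (⨆ z : ℝ, p0 z) ^ 2 ≤ ∫ z, (if 0 < p0 z then (p0' z) ^ 2 / p0 z else 0) := by
  have hp0_int : Integrable p0 := Integrable.of_integral_ne_zero (hp0_dens ▸ one_ne_zero)
  have hφ_int : Integrable (fisherInfoIntegrand p0 p0') := hfisher_int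
  have hg_int := integrable_sqrt_mul hφ_int hp0_int (fisherInfoIntegrand_nonneg p0 p0') hp0_nonneg
  have hbound : ∀ x, p0 x ≤ (∫ z, √(fisherInfoIntegrand p0 p0' z * p0 z)) / 2 := fun x =>
    (le_div_iff₀' two_pos).2 <| two_mul_le_integral_of_abs_sub_le hp0_int hg_int
      (fun _ => Real.sqrt_nonneg _) (fun x y hxy =>
        abs_sub_le_intervalIntegral_sqrt_fisherInfoIntegrand_mul hp0_nonneg hp0_ac hxy
          hg_int.intervalIntegrable) x
  have hbdd : BddAbove (range p0) := ⟨_, forall_mem_range.2 hbound⟩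
  have hsup₀ : 0 ≤ ⨆ z, p0 z := (hp0_nonneg 0).trans (le_ciSup hbdd 0)
  have hCS := sq_integral_sqrt_mul_le hφ_int hp0_int (fisherInfoIntegrand_nonneg p0 p0')
    hp0_nonneg
  rw [hp0_dens, mul_one] at hCS
  refine ⟨hbdd, ?_⟩
  calc 4 * (⨆ z, p0 z) ^ 2 = (2 * ⨆ z, p0 z) ^ 2 := by ring
    _ ≤ (∫ z, √(fisherInfoIntegrand p0 p0' z * p0 z)) ^ 2 := by
      gcongr
      exact (le_div_iff₀' two_pos).1 (ciSup_le hbound)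
    _ ≤ _ := hCS
end

section
/- For $\rho \in (0,1)$, $\mu_1, \mu_2 \in \mathbb{R}$ and $\sigma > 0$, the two-component Gaussian mixture density $p_0(z) = \frac{1-\rho}{\sqrt{2\pi}\sigma} e^{-(z-\mu_1)^2/(2\sigma^2)} + \frac{\rho}{\sqrt{2\pi}\sigma} e^{-(z-\mu_2)^2/(2\sigma^2)}$ is log-concave on $\mathbb{R}$ if and only if $|\mu_1 - \mu_2| \leq 2\sigma$. -/
/-!
Write `p = w₁ + w₂` with Gaussian bumps `wᵢ` of common width `σ`. Since `wᵢ' = wᵢ (μᵢ - z)/σ²`,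
a direct computation gives
`(log p)'' = (μ₁ - μ₂)²/σ⁴ · w₁w₂/(w₁ + w₂)² - 1/σ²`.
By AM-GM the factor `w₁w₂/(w₁ + w₂)²` is at most `1/4`, with equality at the point where the two
bumps cross, so `(log p)'' ≤ 0` everywhere exactly when `(μ₁ - μ₂)² ≤ 4σ²`.
-/

open Real Set

theorem concaveOn_univ_iff_of_hasDerivAt2 {f f' f'' : ℝ → ℝ}
    (hf : ∀ x, HasDerivAt f (f' x) x) (hf' : ∀ x, HasDerivAt f' (f'' x) x) :
    ConcaveOn ℝ univ f ↔ ∀ x, f'' x ≤ 0 := by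
  refine ⟨fun hconc x => ?_, fun hneg => ?_⟩
  · have hderiv : deriv f = f' := funext fun x => (hf x).deriv
    have hanti : Antitone f' := by
      rw [← antitoneOn_univ, ← hderiv]
      exact hconc.antitoneOn_deriv fun x _ => (hf x).differentiableAt
    rw [← (hf' x).deriv]
    exact hanti.deriv_nonpos
  · exact concaveOn_of_hasDerivWithinAt2_nonpos convex_univ
      (fun x _ => (hf x).continuousAt.continuousWithinAt)
      (fun x _ => (hf x).hasDerivWithinAt) (fun x _ => (hf' x).hasDerivWithinAt)
      (fun x _ => hneg x)

theorem mul_div_add_sq_le_quarter (a b : ℝ) : a * b / (a + b) ^ 2 ≤ 1 / 4 := by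
  rcases (sq_nonneg (a + b)).eq_or_lt with h | h
  · rw [← h, div_zero]
    norm_num
  · rw [div_le_iff₀ h]
    linarith [four_mul_le_sq_add a b]

noncomputable def gaussBump (A m s z : ℝ) : ℝ := A * exp (-(z - m) ^ 2 / (2 * s ^ 2))

theorem gaussBump_pos {A : ℝ} (hA : 0 < A) (m s z : ℝ) : 0 < gaussBump A m s z := by
  unfold gaussBump
  positivity

theorem hasDerivAt_gaussBump (A m : ℝ) {s : ℝ} (hs : s ≠ 0) (z : ℝ) :
    HasDerivAt (gaussBump A m s) (gaussBump A m s z * ((m - z) / s ^ 2)) z := by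
  have hexp : HasDerivAt (fun z : ℝ => -(z - m) ^ 2 / (2 * s ^ 2)) ((m - z) / s ^ 2) z := by
    refine ((((hasDerivAt_id' z).sub_const m).pow 2).neg.div_const (2 * s ^ 2)).congr_deriv ?_
    field_simp
    ring
  refine (hexp.exp.const_mul A).congr_deriv ?_
  unfold gaussBump
  ring

theorem exists_gaussBump_eq {A B s m₁ m₂ : ℝ} (hA : 0 < A) (hB : 0 < B) (hs : s ≠ 0)
    (hm : m₁ ≠ m₂) : ∃ z, gaussBump A m₁ s z = gaussBump B m₂ s z := by
  have hm' : m₁ - m₂ ≠ 0 := sub_ne_zero.mpr hm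
  -- the equation `log A - (z - m₁)²/(2s²) = log B - (z - m₂)²/(2s²)` is linear in `z`
  set z := (m₁ + m₂) / 2 + s ^ 2 * (log B - log A) / (m₁ - m₂) with hz
  have hexponents : log A + -(z - m₁) ^ 2 / (2 * s ^ 2) = log B + -(z - m₂) ^ 2 / (2 * s ^ 2) := by
    rw [hz]
    field_simp
    ring
  refine ⟨z, ?_⟩
  rw [gaussBump, gaussBump, ← exp_log hA, ← exp_log hB, ← exp_add, ← exp_add, hexponents]

noncomputable def gaussMix (A B m₁ m₂ s z : ℝ) : ℝ := gaussBump A m₁ s z + gaussBump B m₂ s z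

noncomputable def logGaussMixDeriv (A B m₁ m₂ s z : ℝ) : ℝ :=
  (gaussBump A m₁ s z * ((m₁ - z) / s ^ 2) + gaussBump B m₂ s z * ((m₂ - z) / s ^ 2))
    / gaussMix A B m₁ m₂ s z

noncomputable def logGaussMixDeriv2 (A B m₁ m₂ s z : ℝ) : ℝ :=
  (m₁ - m₂) ^ 2 / s ^ 4 * (gaussBump A m₁ s z * gaussBump B m₂ s z / gaussMix A B m₁ m₂ s z ^ 2)
    - 1 / s ^ 2

section GaussMix

variable {A B : ℝ} (m₁ m₂ : ℝ) {s : ℝ}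

theorem gaussMix_pos (hA : 0 < A) (hB : 0 < B) (z : ℝ) : 0 < gaussMix A B m₁ m₂ s z :=
  add_pos (gaussBump_pos hA m₁ s z) (gaussBump_pos hB m₂ s z)

theorem hasDerivAt_gaussMix (hs : s ≠ 0) (z : ℝ) :
    HasDerivAt (gaussMix A B m₁ m₂ s)
      (gaussBump A m₁ s z * ((m₁ - z) / s ^ 2) + gaussBump B m₂ s z * ((m₂ - z) / s ^ 2)) z :=
  (hasDerivAt_gaussBump A m₁ hs z).add (hasDerivAt_gaussBump B m₂ hs z)

theorem hasDerivAt_log_gaussMix (hA : 0 < A) (hB : 0 < B) (hs : s ≠ 0) (z : ℝ) :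
    HasDerivAt (fun z => log (gaussMix A B m₁ m₂ s z)) (logGaussMixDeriv A B m₁ m₂ s z) z :=
  (hasDerivAt_gaussMix m₁ m₂ hs z).log (gaussMix_pos m₁ m₂ hA hB z).ne'

theorem hasDerivAt_logGaussMixDeriv (hA : 0 < A) (hB : 0 < B) (hs : s ≠ 0) (z : ℝ) :
    HasDerivAt (logGaussMixDeriv A B m₁ m₂ s) (logGaussMixDeriv2 A B m₁ m₂ s z) z := by
  have hlin : ∀ m, HasDerivAt (fun z : ℝ => (m - z) / s ^ 2) (-1 / s ^ 2) z := fun m => by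
    simpa using ((hasDerivAt_id z).const_sub m).div_const (s ^ 2)
  have hnum := ((hasDerivAt_gaussBump A m₁ hs z).mul (hlin m₁)).add
    ((hasDerivAt_gaussBump B m₂ hs z).mul (hlin m₂))
  have hmix := (gaussMix_pos m₁ m₂ hA hB z (s := s)).ne'
  refine (hnum.div (hasDerivAt_gaussMix m₁ m₂ hs z) hmix).congr_deriv ?_
  simp only [logGaussMixDeriv2, gaussMix, Pi.add_apply, Pi.mul_apply] at hmix ⊢
  field_simp
  ring

theorem concaveOn_log_gaussMix_iff (hA : 0 < A) (hB : 0 < B) (hs : s ≠ 0) :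
    ConcaveOn ℝ univ (fun z => log (gaussMix A B m₁ m₂ s z)) ↔ (m₁ - m₂) ^ 2 ≤ 4 * s ^ 2 := by
  rw [concaveOn_univ_iff_of_hasDerivAt2 (hasDerivAt_log_gaussMix m₁ m₂ hA hB hs)
    (hasDerivAt_logGaussMixDeriv m₁ m₂ hA hB hs)]
  have hs2 : 0 < s ^ 2 := by positivity
  have hnonpos_iff : ∀ z, logGaussMixDeriv2 A B m₁ m₂ s z ≤ 0 ↔
      (m₁ - m₂) ^ 2 * (gaussBump A m₁ s z * gaussBump B m₂ s z / gaussMix A B m₁ m₂ s z ^ 2)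
        ≤ s ^ 2 := fun z => by
    rw [logGaussMixDeriv2, sub_nonpos, div_mul_eq_mul_div, div_le_div_iff₀ (by positivity) hs2,
      one_mul, show s ^ 4 = s ^ 2 * s ^ 2 by ring, mul_le_mul_iff_of_pos_right hs2]
  simp only [hnonpos_iff]
  constructor
  · intro hneg
    rcases eq_or_ne m₁ m₂ with rfl | hm
    · norm_num
      positivity
    obtain ⟨z, hz⟩ := exists_gaussBump_eq hA hB hs hm
    have hw := gaussBump_pos hA m₁ s z
    have hquarter : gaussBump A m₁ s z * gaussBump B m₂ s z / gaussMix A B m₁ m₂ s z ^ 2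
        = 1 / 4 := by
      rw [gaussMix, ← hz]
      field_simp
      ring
    have := hneg z
    rw [hquarter] at this
    linarith
  · intro hm z
    calc (m₁ - m₂) ^ 2 * (gaussBump A m₁ s z * gaussBump B m₂ s z / gaussMix A B m₁ m₂ s z ^ 2)
        ≤ (m₁ - m₂) ^ 2 * (1 / 4) :=
          mul_le_mul_of_nonneg_left (mul_div_add_sq_le_quarter _ _) (sq_nonneg _)
      _ ≤ 4 * s ^ 2 * (1 / 4) := by gcongr
      _ = s ^ 2 := by ring

end GaussMix

/-- The two-component Gaussian mixture density
`p0(z) = (1-ρ)/(√(2π)σ) exp(-(z-μ₁)²/(2σ²)) + ρ/(√(2π)σ) exp(-(z-μ₂)²/(2σ²))`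
is log-concave on `ℝ` if and only if `|μ₁ - μ₂| ≤ 2σ`. -/
theorem stmt3 (ρ μ1 μ2 σ : ℝ) (hρ : ρ ∈ Set.Ioo (0:ℝ) 1) (hσ : 0 < σ) :
    ConcaveOn ℝ Set.univ (fun z : ℝ =>
      Real.log ((1 - ρ) / (Real.sqrt (2 * Real.pi) * σ) * Real.exp (-(z - μ1) ^ 2 / (2 * σ ^ 2))
        + ρ / (Real.sqrt (2 * Real.pi) * σ) * Real.exp (-(z - μ2) ^ 2 / (2 * σ ^ 2))))
      ↔ |μ1 - μ2| ≤ 2 * σ := by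
  have hA : 0 < (1 - ρ) / (sqrt (2 * π) * σ) := by
    have := sub_pos.mpr hρ.2
    positivity
  have hB : 0 < ρ / (sqrt (2 * π) * σ) := by
    have := hρ.1
    positivity
  have hconc := concaveOn_log_gaussMix_iff μ1 μ2 hA hB hσ.ne'
  simp only [gaussMix, gaussBump] at hconc
  rw [hconc, ← abs_of_pos (by positivity : 0 < 2 * σ), ← sq_le_sq, mul_pow]
  norm_num
end

section
/- Fix $\alpha > 0$ and define $J : [0,1] \to \mathbb{R}$ by $J(u) = \big(2\min(u, 1-u)\big)^{1 + 1/\alpha}$. Then the least concave majorant of $J$ on $[0,1]$ is the function $u \mapsto 2\min(u, 1-u)$. -/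
/-! The tent `u ↦ 2 min(u, 1-u)` is the minimum of two affine maps, hence concave, and it dominates
`J` because its values lie in `[0,1]` and the exponent is at least `1`. It is affine on `[0,1/2]` and
on `[1/2,1]` and agrees with `J` at `0`, `1/2` and `1`; a concave function lies above its chords, so
any concave majorant of `J` dominates the tent on both halves. -/

open Set

theorem ConcaveOn.affine_le_of_le_endpoints {f : ℝ → ℝ} {x y m c : ℝ}
    (hf : ConcaveOn ℝ (Icc x y) f) (hx : m * x + c ≤ f x) (hy : m * y + c ≤ f y)
    {u : ℝ} (hu : u ∈ Icc x y) : m * u + c ≤ f u := by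
  have hxy : x ≤ y := hu.1.trans hu.2
  have hg : ConcaveOn ℝ (Icc x y) (f - fun v => m * v + c) :=
    hf.sub (((LinearMap.mulLeft ℝ m).convexOn (convex_Icc x y)).add_const c)
  have hgu := hg.ge_on_segment (left_mem_Icc.2 hxy) (right_mem_Icc.2 hxy)
    (by rwa [segment_eq_Icc hxy])
  have hends := le_min (sub_nonneg.2 hx) (sub_nonneg.2 hy)
  simp only [Pi.sub_apply] at hgu hends
  linarith

theorem concaveOn_two_mul_min_one_sub : ConcaveOn ℝ univ fun u : ℝ => 2 * min u (1 - u) := by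
  have hmin : ConcaveOn ℝ univ fun u : ℝ => min u (1 - u) :=
    (concaveOn_id convex_univ).inf ((concaveOn_const 1 convex_univ).sub (convexOn_id convex_univ))
  exact hmin.smul zero_le_two

theorem two_mul_min_one_sub_le_of_concaveOn {h : ℝ → ℝ} (hc : ConcaveOn ℝ (Icc 0 1) h)
    (h0 : 0 ≤ h 0) (hhalf : 1 ≤ h (1 / 2)) (h1 : 0 ≤ h 1) :
    ∀ u ∈ Icc 0 1, 2 * min u (1 - u) ≤ h u := by
  intro u hu
  rcases le_total u (1 / 2) with hle | hge
  · have := (hc.subset (Icc_subset_Icc_right (by norm_num)) (convex_Icc _ _)).affine_le_of_le_endpoints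
      (m := 2) (c := 0) (by simpa using h0) (by simpa using hhalf) ⟨hu.1, hle⟩
    linarith [min_le_left u (1 - u)]
  · have := (hc.subset (Icc_subset_Icc_left (by norm_num)) (convex_Icc _ _)).affine_le_of_le_endpoints
      (m := -2) (c := 2) (by norm_num; linarith) (by simpa using h1) ⟨hge, hu.2⟩
    linarith [min_le_right u (1 - u)]

theorem two_mul_min_one_sub_mem_Icc {u : ℝ} (hu : u ∈ Icc 0 1) :
    2 * min u (1 - u) ∈ Icc 0 1 :=
  ⟨by have := le_min hu.1 (sub_nonneg.2 hu.2); linarith,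
    by linarith [min_le_left u (1 - u), min_le_right u (1 - u)]⟩

/-- For `α > 0`, the least concave majorant on `[0,1]` of
`J(u) = (2 min(u, 1-u))^(1+1/α)` is `u ↦ 2 min(u, 1-u)`: the latter is concave on `[0,1]`,
dominates `J` there, and is dominated by every concave function dominating `J`. -/
theorem stmt7 (α : ℝ) (hα : 0 < α) :
    ConcaveOn ℝ (Set.Icc 0 1) (fun u : ℝ => 2 * min u (1 - u)) ∧
    (∀ u ∈ Set.Icc (0:ℝ) 1, (2 * min u (1 - u)) ^ (1 + 1 / α) ≤ 2 * min u (1 - u)) ∧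
    ∀ h : ℝ → ℝ, ConcaveOn ℝ (Set.Icc 0 1) h →
      (∀ u ∈ Set.Icc (0:ℝ) 1, (2 * min u (1 - u)) ^ (1 + 1 / α) ≤ h u) →
      ∀ u ∈ Set.Icc (0:ℝ) 1, 2 * min u (1 - u) ≤ h u := by
  have hp : 1 ≤ 1 + 1 / α := le_add_of_nonneg_right (one_div_pos.2 hα).le
  refine ⟨concaveOn_two_mul_min_one_sub.subset (subset_univ _) (convex_Icc 0 1),
    fun u hu => ?_, fun h hc hJ => two_mul_min_one_sub_le_of_concaveOn hc ?_ ?_ ?_⟩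
  · obtain ⟨h0, h1⟩ := two_mul_min_one_sub_mem_Icc hu
    exact Real.rpow_le_self_of_le_one h0 h1 hp
  · simpa [Real.zero_rpow (by positivity : 1 + α⁻¹ ≠ 0)] using hJ 0 (by norm_num)
  · simpa [show min (2⁻¹ : ℝ) (1 - 2⁻¹) = 2⁻¹ by norm_num] using hJ (1 / 2) (by norm_num)
  · simpa [Real.zero_rpow (by positivity : 1 + α⁻¹ ≠ 0)] using hJ 1 (by norm_num)
end

section
/- Let $F : [0,1] \to \mathbb{R}$ have least concave majorant $\hat F$ on $[0,1]$. Suppose $v \in (0,1)$ is such that $F$ is continuous at $v$ and $F(v) < \hat F(v) < \infty$. Then there exists $\delta \in (0, \min(v, 1-v))$ such that $\hat F$ is affine on $[v - \delta, v + \delta]$. -/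
/-!
Pick `F v < c < F̂ v`. By continuity of `F` at `v`, and of the concave `F̂` at the interior
point `v`, there is `δ > 0` with `F < c` and `c < F̂` on `[v - δ, v + δ] ⊆ (0, 1)`. Let `L` be the
secant line of `F̂` through `v ± δ`. By concavity `F̂ ≤ L` off `(v - δ, v + δ)`, while on
`[v - δ, v + δ]` we have `L ≥ min (F̂ (v - δ)) (F̂ (v + δ)) > c > F`. Hence `min F̂ L` is a concave
majorant of `F`, so `F̂ ≤ L` everywhere; concavity gives `L ≤ F̂` on `[v - δ, v + δ]`.
-/

open Set Filter Topology

variable {𝕜 : Type*} [Field 𝕜]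

def secantLine (f : 𝕜 → 𝕜) (x y u : 𝕜) : 𝕜 := f x + slope f x y * (u - x)

@[simp]
theorem secantLine_left (f : 𝕜 → 𝕜) (x y : 𝕜) : secantLine f x y x = f x := by
  simp [secantLine]

@[simp]
theorem secantLine_right (f : 𝕜 → 𝕜) (x y : 𝕜) : secantLine f x y y = f y := by
  simpa [secantLine, mul_comm, add_comm] using sub_smul_slope_vadd f x y

theorem sub_secantLine (f : 𝕜 → 𝕜) (x y u : 𝕜) :
    f u - secantLine f x y u = (u - x) * (slope f x u - slope f x y) := by
  have h := sub_smul_slope f x u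
  simp only [smul_eq_mul, vsub_eq_sub] at h
  simp only [secantLine]
  linear_combination -h

variable [LinearOrder 𝕜] [IsStrictOrderedRing 𝕜]

theorem concaveOn_secantLine (f : 𝕜 → 𝕜) (x y : 𝕜) {s : Set 𝕜} (hs : Convex 𝕜 s) :
    ConcaveOn 𝕜 s (secantLine f x y) := by
  refine ⟨hs, fun p _ q _ a b _ _ hab => le_of_eq ?_⟩
  simp only [secantLine, smul_eq_mul]
  linear_combination (f x - slope f x y * x) * hab

theorem min_le_secantLine (f : 𝕜 → 𝕜) {x y u : 𝕜} (hu : u ∈ Icc x y) :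
    min (f x) (f y) ≤ secantLine f x y u := by
  simpa using (concaveOn_secantLine f x y convex_univ).min_le_of_mem_Icc trivial trivial hu

namespace ConcaveOn

variable {s : Set 𝕜} {f : 𝕜 → 𝕜} {x y u : 𝕜}

theorem secantLine_le (hf : ConcaveOn 𝕜 s f) (hx : x ∈ s) (hy : y ∈ s) (hu : u ∈ Icc x y) :
    secantLine f x y u ≤ f u := by
  rcases eq_or_lt_of_le hu.1 with rfl | hxu
  · simp
  have hus : u ∈ s := hf.1.ordConnected.out hx hy hu
  have hslope : slope f x y ≤ slope f x u :=
    hf.slope_anti hx ⟨hus, hxu.ne'⟩ ⟨hy, (hxu.trans_le hu.2).ne'⟩ hu.2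
  rw [← sub_nonneg, sub_secantLine]
  exact mul_nonneg (sub_nonneg.2 hxu.le) (sub_nonneg.2 hslope)

theorem le_secantLine (hf : ConcaveOn 𝕜 s f) (hx : x ∈ s) (hy : y ∈ s) (hxy : x < y)
    (hu : u ∈ s) (hu' : u ∉ Ioo x y) : f u ≤ secantLine f x y u := by
  rw [← sub_nonpos, sub_secantLine]
  rcases lt_trichotomy u x with hux | rfl | hxu
  · have hslope : slope f x y ≤ slope f x u :=
      hf.slope_anti hx ⟨hu, hux.ne⟩ ⟨hy, hxy.ne'⟩ (hux.trans hxy).le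
    exact mul_nonpos_of_nonpos_of_nonneg (sub_nonpos.2 hux.le) (sub_nonneg.2 hslope)
  · simp
  · have hyu : y ≤ u := not_lt.1 fun huy => hu' ⟨hxu, huy⟩
    have hslope : slope f x u ≤ slope f x y :=
      hf.slope_anti hx ⟨hy, hxy.ne'⟩ ⟨hu, hxu.ne'⟩ hyu
    exact mul_nonpos_of_nonneg_of_nonpos (sub_nonneg.2 hxu.le) (sub_nonpos.2 hslope)

theorem eqOn_secantLine_of_isLeast {F : 𝕜 → 𝕜} (hf : ConcaveOn 𝕜 s f)
    (hdom : ∀ u ∈ s, F u ≤ f u)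
    (hmin : ∀ h : 𝕜 → 𝕜, ConcaveOn 𝕜 s h → (∀ u ∈ s, F u ≤ h u) → ∀ u ∈ s, f u ≤ h u)
    (hx : x ∈ s) (hy : y ∈ s) (hxy : x < y) {c : 𝕜} (hFc : ∀ u ∈ Ioo x y, F u ≤ c)
    (hcx : c ≤ f x) (hcy : c ≤ f y) : EqOn f (secantLine f x y) (Icc x y) := by
  have hmaj : ∀ u ∈ s, F u ≤ min (f u) (secantLine f x y u) := by
    intro u hu
    refine le_min (hdom u hu) ?_
    by_cases hu' : u ∈ Ioo x y
    · calc F u ≤ c := hFc u hu'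
        _ ≤ min (f x) (f y) := le_min hcx hcy
        _ ≤ secantLine f x y u := min_le_secantLine f (Ioo_subset_Icc_self hu')
    · exact (hdom u hu).trans (hf.le_secantLine hx hy hxy hu hu')
  intro u hu
  have hus : u ∈ s := hf.1.ordConnected.out hx hy hu
  refine le_antisymm ?_ (hf.secantLine_le hx hy hu)
  exact (hmin _ (hf.inf (concaveOn_secantLine f x y hf.1)) hmaj u hus).trans (min_le_right _ _)

end ConcaveOn

/-- Local affineness of the least concave majorant: if `F` is continuous at `v ∈ (0,1)`
and `F v < hatF v`, then `hatF` is affine on `[v - δ, v + δ]` for some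
`δ ∈ (0, min v (1-v))`. -/
theorem stmt11 (F hatF : ℝ → ℝ) (v : ℝ) (hv : v ∈ Set.Ioo (0:ℝ) 1)
    (hconc : ConcaveOn ℝ (Set.Icc 0 1) hatF)
    (hdom : ∀ u ∈ Set.Icc (0:ℝ) 1, F u ≤ hatF u)
    (hmin : ∀ h : ℝ → ℝ, ConcaveOn ℝ (Set.Icc 0 1) h →
      (∀ u ∈ Set.Icc (0:ℝ) 1, F u ≤ h u) → ∀ u ∈ Set.Icc (0:ℝ) 1, hatF u ≤ h u)
    (hFcont : ContinuousWithinAt F (Set.Icc 0 1) v)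
    (hlt : F v < hatF v) :
    ∃ δ ∈ Set.Ioo (0:ℝ) (min v (1 - v)), ∃ a b : ℝ,
      ∀ u ∈ Set.Icc (v - δ) (v + δ), hatF u = a * u + b := by
  obtain ⟨c, hFc, hcF⟩ := exists_between hlt
  have hF_lt : ∀ᶠ u in 𝓝 v, u ∈ Icc (0:ℝ) 1 → F u < c :=
    eventually_nhdsWithin_iff.1 (hFcont.eventually (eventually_lt_nhds hFc))
  have hhatF_gt : ∀ᶠ u in 𝓝 v, c < hatF u :=
    (hconc.continuousOn_interior.continuousAt (by
      rw [interior_Icc]; exact isOpen_Ioo.mem_nhds hv)).eventually (eventually_gt_nhds hcF)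
  obtain ⟨δ, hδ, hball⟩ := Metric.nhds_basis_closedBall.eventually_iff.1
    ((isOpen_Ioo.eventually_mem hv).and (hF_lt.and hhatF_gt))
  simp only [Real.closedBall_eq_Icc] at hball
  have hleft := hball ⟨le_rfl, by linarith⟩
  have hright := hball ⟨by linarith, le_rfl⟩
  have hF_le : ∀ u ∈ Ioo (v - δ) (v + δ), F u ≤ c := fun u hu =>
    have hu' := hball (Ioo_subset_Icc_self hu)
    (hu'.2.1 (Ioo_subset_Icc_self hu'.1)).le
  have hsecant := hconc.eqOn_secantLine_of_isLeast hdom hmin (Ioo_subset_Icc_self hleft.1)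
    (Ioo_subset_Icc_self hright.1) (by linarith) hF_le hleft.2.2.le hright.2.2.le
  refine ⟨δ, ⟨hδ, lt_min (by linarith [hleft.1.1]) (by linarith [hright.1.2])⟩,
    slope hatF (v - δ) (v + δ), hatF (v - δ) - slope hatF (v - δ) (v + δ) * (v - δ),
    fun u hu => ?_⟩
  rw [hsecant hu, secantLine]
  ring
end

section
/- Let $F : [0,1] \to \mathbb{R}$ and let $\hat F$ be its least concave majorant. If $F$ is differentiable at some $v \in (0,1)$ and $\hat F(v) < \infty$, then $\hat F$ is differentiable at $v$. -/
/-!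
If `F v < hatF v`, then near `v` the function `F` stays below some level `c < hatF v`, while the
chord of `hatF` over a small interval `[a, b] ∋ v` stays above `c`. That chord is then itself a
concave majorant of `F`, so minimality forces `hatF` to be affine on `[a, b]`.

If `F v = hatF v`, concavity of `hatF` and `F ≤ hatF` squeeze the right difference quotients of
`hatF` at `v` between those of `F` and `F'(v)`, and the left ones between `F'(v)` and those of `F`.
-/

open Set Filter Topology

section Touching

variable {S : Set ℝ} {F G : ℝ → ℝ} {u v d : ℝ}

lemma slope_le_slope_of_le_of_eq_of_lt (hFG : F u ≤ G u) (hv : F v = G v) (hvu : v < u) :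
    slope F v u ≤ slope G v u := by
  simp only [slope_def_field, hv]
  gcongr

lemma slope_le_slope_of_le_of_eq_of_gt (hFG : F u ≤ G u) (hv : F v = G v) (huv : u < v) :
    slope G v u ≤ slope F v u := by
  simp only [slope_def_field, hv]
  exact div_le_div_of_nonpos_of_le (by linarith) (by linarith)

/- By concavity, the difference quotients of `G` on one side of `v` are bounded by those of `F`
on the other side, and the latter tend to `d`. -/
lemma ConcaveOn.slope_le_of_touching (hG : ConcaveOn ℝ S G) (hS : S ∈ 𝓝 v)
    (hFG : ∀ u ∈ S, F u ≤ G u) (hv : F v = G v) (hF : HasDerivAt F d v) (hu : u ∈ S)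
    (hvu : v < u) : slope G v u ≤ d := by
  refine ge_of_tendsto ((hasDerivAt_iff_tendsto_slope.1 hF).mono_left (nhdsLT_le_nhdsNE v)) ?_
  filter_upwards [self_mem_nhdsWithin, nhdsWithin_le_nhds hS] with w (hwv : w < v) hw
  calc slope G v u ≤ slope G v w :=
        hG.slope_anti (mem_of_mem_nhds hS) ⟨hw, hwv.ne⟩ ⟨hu, hvu.ne'⟩ (hwv.trans hvu).le
    _ ≤ slope F v w := slope_le_slope_of_le_of_eq_of_gt (hFG w hw) hv hwv

lemma ConcaveOn.le_slope_of_touching (hG : ConcaveOn ℝ S G) (hS : S ∈ 𝓝 v)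
    (hFG : ∀ u ∈ S, F u ≤ G u) (hv : F v = G v) (hF : HasDerivAt F d v) (hu : u ∈ S)
    (huv : u < v) : d ≤ slope G v u := by
  refine le_of_tendsto ((hasDerivAt_iff_tendsto_slope.1 hF).mono_left (nhdsGT_le_nhdsNE v)) ?_
  filter_upwards [self_mem_nhdsWithin, nhdsWithin_le_nhds hS] with w (hvw : v < w) hw
  calc slope F v w ≤ slope G v w := slope_le_slope_of_le_of_eq_of_lt (hFG w hw) hv hvw
    _ ≤ slope G v u :=
        hG.slope_anti (mem_of_mem_nhds hS) ⟨hu, huv.ne⟩ ⟨hw, hvw.ne'⟩ (huv.trans hvw).le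

theorem ConcaveOn.hasDerivAt_of_touching (hG : ConcaveOn ℝ S G) (hS : S ∈ 𝓝 v)
    (hFG : ∀ u ∈ S, F u ≤ G u) (hv : F v = G v) (hF : HasDerivAt F d v) : HasDerivAt G d v := by
  rw [hasDerivAt_iff_tendsto_slope, tendsto_iff_dist_tendsto_zero]
  refine squeeze_zero' (Eventually.of_forall fun _ => dist_nonneg) ?_
    (tendsto_iff_dist_tendsto_zero.1 (hasDerivAt_iff_tendsto_slope.1 hF))
  filter_upwards [self_mem_nhdsWithin, nhdsWithin_le_nhds hS] with u (hne : u ≠ v) hu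
  rw [Real.dist_eq, Real.dist_eq]
  rcases hne.lt_or_gt with huv | hvu
  · have := hG.le_slope_of_touching hS hFG hv hF hu huv
    have := slope_le_slope_of_le_of_eq_of_gt (hFG u hu) hv huv
    rw [abs_of_nonneg (by linarith), abs_of_nonneg (by linarith)]
    linarith
  · have := hG.slope_le_of_touching hS hFG hv hF hu hvu
    have := slope_le_slope_of_le_of_eq_of_lt (hFG u hu) hv hvu
    rw [abs_of_nonpos (by linarith), abs_of_nonpos (by linarith)]
    linarith

end Touching

section Chord

noncomputable def chord (G : ℝ → ℝ) (a b u : ℝ) : ℝ := G a + slope G a b * (u - a)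

variable {S : Set ℝ} {F G : ℝ → ℝ} {a b u v : ℝ}

lemma chord_right (G : ℝ → ℝ) (a b : ℝ) : chord G a b b = G b := by
  rw [chord, mul_comm, ← smul_eq_mul, sub_smul_slope, vsub_eq_sub, add_sub_cancel]

lemma hasDerivAt_chord (G : ℝ → ℝ) (a b u : ℝ) : HasDerivAt (chord G a b) (slope G a b) u := by
  have := (((hasDerivAt_id' u).sub_const a).const_mul (slope G a b)).const_add (G a)
  rwa [mul_one] at this

lemma concaveOn_chord (hS : Convex ℝ S) (G : ℝ → ℝ) (a b : ℝ) : ConcaveOn ℝ S (chord G a b) :=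
  ⟨hS, fun x _ y _ p q _ _ hpq => le_of_eq <| by
    simp only [chord, smul_eq_mul]; linear_combination (G a - slope G a b * a) * hpq⟩

lemma min_le_chord (hau : a ≤ u) (hub : u ≤ b) : min (G a) (G b) ≤ chord G a b u := by
  rcases le_total 0 (slope G a b) with hm | hm
  · exact (min_le_left _ _).trans (le_add_of_nonneg_right (mul_nonneg hm (sub_nonneg.2 hau)))
  · refine (min_le_right _ _).trans (le_of_eq_of_le (chord_right G a b).symm ?_)
    simp only [chord]
    nlinarith

lemma ConcaveOn.chord_le (hG : ConcaveOn ℝ S G) (ha : a ∈ S) (hb : b ∈ S) (hau : a ≤ u)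
    (hub : u ≤ b) : chord G a b u ≤ G u := by
  rcases hau.eq_or_lt with rfl | hau
  · simp [chord]
  have := hG.slope_anti ha ⟨hG.1.ordConnected.out ha hb ⟨hau.le, hub⟩, hau.ne'⟩
    ⟨hb, (hau.trans_le hub).ne'⟩ hub
  rw [slope_def_field G a u, le_div_iff₀ (sub_pos.2 hau)] at this
  rw [chord]
  linarith

lemma ConcaveOn.le_chord (hG : ConcaveOn ℝ S G) (ha : a ∈ S) (hb : b ∈ S) (hu : u ∈ S)
    (hab : a < b) (hu' : u ∉ Ioo a b) : G u ≤ chord G a b u := by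
  rw [mem_Ioo, not_and_or, not_lt, not_lt] at hu'
  rcases hu' with hua | hbu
  · rcases hua.eq_or_lt with rfl | hua
    · simp [chord]
    have := hG.slope_anti ha ⟨hu, hua.ne⟩ ⟨hb, hab.ne'⟩ (hua.trans hab).le
    rw [slope_def_field G a u, le_div_iff_of_neg (sub_neg.2 hua)] at this
    rw [chord]
    linarith
  · have := hG.slope_anti ha ⟨hb, hab.ne'⟩ ⟨hu, (hab.trans_le hbu).ne'⟩ hbu
    rw [slope_def_field G a u, div_le_iff₀ (sub_pos.2 (hab.trans_le hbu))] at this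
    rw [chord]
    linarith

end Chord

section LocalAffineness

variable {S : Set ℝ} {F G : ℝ → ℝ} {a b v : ℝ}

/- The chord is a concave majorant of `F`, since outside `[a, b]` it lies above `G`. -/
lemma ConcaveOn.eqOn_chord_of_le_chord (hG : ConcaveOn ℝ S G) (hFG : ∀ u ∈ S, F u ≤ G u)
    (hmin : ∀ h : ℝ → ℝ, ConcaveOn ℝ S h → (∀ u ∈ S, F u ≤ h u) → ∀ u ∈ S, G u ≤ h u)
    (ha : a ∈ S) (hb : b ∈ S) (hab : a < b) (hF : ∀ u ∈ Icc a b, F u ≤ chord G a b u) :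
    EqOn G (chord G a b) (Icc a b) := by
  have hdom : ∀ u ∈ S, F u ≤ chord G a b u := fun u hu => by
    by_cases hu' : u ∈ Ioo a b
    · exact hF u (Ioo_subset_Icc_self hu')
    · exact (hFG u hu).trans (hG.le_chord ha hb hu hab hu')
  intro u hu
  exact le_antisymm (hmin _ (concaveOn_chord hG.1 G a b) hdom u (hG.1.ordConnected.out ha hb hu))
    (hG.chord_le ha hb hu.1 hu.2)

theorem ConcaveOn.exists_eventuallyEq_chord (hG : ConcaveOn ℝ S G) (hS : S ∈ 𝓝 v)
    (hFG : ∀ u ∈ S, F u ≤ G u)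
    (hmin : ∀ h : ℝ → ℝ, ConcaveOn ℝ S h → (∀ u ∈ S, F u ≤ h u) → ∀ u ∈ S, G u ≤ h u)
    (hF : ContinuousAt F v) (hlt : F v < G v) : ∃ a b, G =ᶠ[𝓝 v] chord G a b := by
  obtain ⟨c, hFc, hcG⟩ := exists_between hlt
  have hGc : ContinuousAt G v :=
    hG.continuousOn_interior.continuousAt (interior_mem_nhds.2 hS)
  have hnear : ∀ᶠ u in 𝓝 v, u ∈ S ∧ F u < c ∧ c < G u :=
    Eventually.and hS <|
      (hF.eventually (gt_mem_nhds hFc)).and (hGc.eventually (lt_mem_nhds hcG))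
  obtain ⟨ε, hε, hball⟩ := Metric.eventually_nhds_iff.1 hnear
  have hdist : ∀ u ∈ Icc (v - ε / 2) (v + ε / 2), dist u v < ε := fun u hu => by
    rw [Real.dist_eq, abs_sub_lt_iff]
    constructor <;> linarith [hu.1, hu.2]
  obtain ⟨ha, -, hca⟩ := hball (hdist _ ⟨le_rfl, by linarith⟩)
  obtain ⟨hb, -, hcb⟩ := hball (hdist _ ⟨by linarith, le_rfl⟩)
  refine ⟨v - ε / 2, v + ε / 2, eventuallyEq_of_mem (Icc_mem_nhds (by linarith) (by linarith))
    (hG.eqOn_chord_of_le_chord hFG hmin ha hb (by linarith) fun u hu => ?_)⟩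
  calc F u ≤ c := (hball (hdist u hu)).2.1.le
    _ ≤ min (G (v - ε / 2)) (G (v + ε / 2)) := le_min hca.le hcb.le
    _ ≤ chord G _ _ u := min_le_chord hu.1 hu.2

end LocalAffineness

/-- If `F` is differentiable at `v ∈ (0,1)` (within `(0,1)`), then its least concave
majorant `hatF` on `[0,1]` is also differentiable at `v`. -/
theorem stmt12 (F hatF : ℝ → ℝ) (v : ℝ) (hv : v ∈ Set.Ioo (0:ℝ) 1)
    (hconc : ConcaveOn ℝ (Set.Icc 0 1) hatF)
    (hdom : ∀ u ∈ Set.Icc (0:ℝ) 1, F u ≤ hatF u)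
    (hmin : ∀ h : ℝ → ℝ, ConcaveOn ℝ (Set.Icc 0 1) h →
      (∀ u ∈ Set.Icc (0:ℝ) 1, F u ≤ h u) → ∀ u ∈ Set.Icc (0:ℝ) 1, hatF u ≤ h u)
    (hdiff : DifferentiableWithinAt ℝ F (Set.Ioo 0 1) v) :
    DifferentiableWithinAt ℝ hatF (Set.Ioo 0 1) v := by
  have hS : Icc (0:ℝ) 1 ∈ 𝓝 v := Icc_mem_nhds hv.1 hv.2
  have hF : DifferentiableAt ℝ F v := hdiff.differentiableAt (Ioo_mem_nhds hv.1 hv.2)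
  refine DifferentiableAt.differentiableWithinAt ?_
  rcases (hdom v (mem_of_mem_nhds hS)).eq_or_lt with htouch | hgap
  · exact (hconc.hasDerivAt_of_touching hS hdom htouch hF.hasDerivAt).differentiableAt
  · obtain ⟨a, b, hchord⟩ := hconc.exists_eventuallyEq_chord hS hdom hmin hF.continuousAt hgap
    exact (hasDerivAt_chord hatF a b v).differentiableAt.congr_of_eventuallyEq hchord
end
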